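/- Let σ and w be unit vectors in ℂ^N with ⟨w,σ⟩ = ⟨σ,w⟩ = x for some real 0 < x < 1. Define Grover's iterate G = −(I − 2|σ⟩⟨σ|)·(I − 2|w⟩⟨w|), the Hamiltonian H = 2ix·(|w⟩⟨σ| − |σ⟩⟨w|), and the time t₀ = (π − 2·arccos x)/(2x·√(1 − x²)). Then exp(−iHt₀)·σ = G·σ and exp(−iHt₀)·w = G·w. -/

import Mathlib

open scoped InnerProductSpace

/-- The outer product |u⟩⟨v| : the rank-one operator sending φ to ⟨v,φ⟩·u
(inner product conjugate-linear in the first argument). -/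
noncomputable def outer {N : ℕ} (u v : EuclideanSpace ℂ (Fin N)) :
    EuclideanSpace ℂ (Fin N) →L[ℂ] EuclideanSpace ℂ (Fin N) :=
  ContinuousLinearMap.toSpanSingleton ℂ u ∘L (innerSL ℂ v)

/-!
On the plane spanned by `σ` and `w`, the operator `A = |w⟩⟨σ| - |σ⟩⟨w|` squares to `-ω²` with
`ω = √(1 - x²)`, so `exp (s A)` acts there as `cos (s ω) + (sin (s ω) / ω) A`. Since
`-i t₀ H = s A` with `s = 2 t₀ x`, the time `t₀` makes `s ω = π - 2 arccos x`, whose cosine is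
`1 - 2x²` and whose sine is `2xω`; these are exactly the coefficients of Grover's iterate on `σ`
and `w`.
-/

open Complex

theorem cos_pi_sub_two_mul_arccos {x : ℝ} (hx₁ : -1 ≤ x) (hx₂ : x ≤ 1) :
    Real.cos (Real.pi - 2 * Real.arccos x) = 1 - 2 * x ^ 2 := by
  rw [Real.cos_pi_sub, Real.cos_two_mul, Real.cos_arccos hx₁ hx₂]
  ring

theorem sin_pi_sub_two_mul_arccos {x : ℝ} (hx₁ : -1 ≤ x) (hx₂ : x ≤ 1) :
    Real.sin (Real.pi - 2 * Real.arccos x) = 2 * x * √(1 - x ^ 2) := by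
  rw [Real.sin_pi_sub, Real.sin_two_mul, Real.sin_arccos, Real.cos_arccos hx₁ hx₂]
  ring

section Exponential

variable {E : Type*} [NormedAddCommGroup E] [NormedSpace ℂ E] [CompleteSpace E]
  {T : E →L[ℂ] E} {v : E}

theorem exp_apply_of_apply_eq_smul {c : ℂ} (h : T v = c • v) :
    NormedSpace.exp T v = Complex.exp c • v := by
  have hpow : ∀ n : ℕ, (T ^ n) v = c ^ n • v := by
    intro n
    induction n with
    | zero => simp
    | succ n ih => rw [pow_succ', mul_apply_eq_comp, ih, map_smul, h, smul_smul, pow_succ]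
  have hT := (NormedSpace.exp_series_hasSum_exp' (𝕂 := ℂ) T).mapL (ContinuousLinearMap.apply ℂ E v)
  have hc := (NormedSpace.exp_series_hasSum_exp' (𝕂 := ℂ) c).smul_const v
  simp only [ContinuousLinearMap.apply_apply, smul_apply, hpow, smul_smul, ← smul_eq_mul] at hT hc
  rw [Complex.exp_eq_exp_ℂ]
  exact hT.unique hc

/-- `T v ± iθ v` are eigenvectors of `T` with eigenvalues `±iθ`, and `v` is their difference
divided by `2iθ`. -/
theorem exp_apply_of_apply_apply_eq_neg_sq_smul {θ : ℂ} (hθ : θ ≠ 0)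
    (h : T (T v) = -(θ ^ 2) • v) :
    NormedSpace.exp T v = Complex.cos θ • v + (Complex.sin θ / θ) • T v := by
  have hplus : T (T v + (θ * I) • v) = (θ * I) • (T v + (θ * I) • v) := by
    rw [map_add, map_smul, h]; match_scalars <;> grind [I_sq]
  have hminus : T (T v - (θ * I) • v) = (-(θ * I)) • (T v - (θ * I) • v) := by
    rw [map_sub, map_smul, h]; match_scalars <;> grind [I_sq]
  have hv : v = (2 * θ * I)⁻¹ • ((T v + (θ * I) • v) - (T v - (θ * I) • v)) := by
    match_scalars <;> field_simp [I_ne_zero] <;> ring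
  have hcos : Complex.cos θ = (Complex.exp (θ * I) + Complex.exp (-(θ * I))) / 2 := by
    rw [← neg_mul, ← two_cos]; ring
  have hsin : Complex.sin θ = (Complex.exp (-(θ * I)) - Complex.exp (θ * I)) * I / 2 := by
    rw [← neg_mul, ← two_sin]; ring
  conv_lhs => rw [hv]
  rw [map_smul, map_sub, exp_apply_of_apply_eq_smul hplus, exp_apply_of_apply_eq_smul hminus,
    hcos, hsin]
  match_scalars <;> field_simp [I_ne_zero] <;> grind [I_sq]

theorem exp_smul_apply_of_apply_apply_eq_neg_sq_smul {s ω : ℂ} (hsω : s * ω ≠ 0)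
    (h : T (T v) = -(ω ^ 2) • v) :
    NormedSpace.exp (s • T) v = Complex.cos (s * ω) • v + (Complex.sin (s * ω) / ω) • T v := by
  have hs : (s • T) ((s • T) v) = -((s * ω) ^ 2) • v := by
    rw [smul_apply, smul_apply, map_smul, h, smul_smul, smul_smul]; ring_nf
  rw [exp_apply_of_apply_apply_eq_neg_sq_smul hsω hs, smul_apply, smul_smul]
  congr 2
  field_simp [left_ne_zero_of_mul hsω]

theorem exp_hamiltonian_apply {x t₀ : ℝ} (hx0 : 0 < x) (hx1 : x < 1)
    (ht₀ : t₀ = (Real.pi - 2 * Real.arccos x) / (2 * x * √(1 - x ^ 2)))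
    (h : T (T v) = -(1 - (x : ℂ) ^ 2) • v) :
    NormedSpace.exp ((-(I * (t₀ : ℂ))) • (2 * I * (x : ℂ)) • T) v
      = (1 - 2 * (x : ℂ) ^ 2) • v + (2 * (x : ℂ)) • T v := by
  set ω := √(1 - x ^ 2) with hω_def
  have hx₀ : (x : ℂ) ≠ 0 := by exact_mod_cast hx0.ne'
  have hω : (ω : ℂ) ≠ 0 := by exact_mod_cast (Real.sqrt_pos.2 (by nlinarith)).ne'
  have hω_sq : -(1 - (x : ℂ) ^ 2) = -((ω : ℂ) ^ 2) := by
    rw [neg_inj]; exact_mod_cast (Real.sq_sqrt (by nlinarith : (0 : ℝ) ≤ 1 - x ^ 2)).symm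
  set θ := Real.pi - 2 * Real.arccos x
  have hθ : ((2 * t₀ * x : ℝ) : ℂ) * ω = θ := by rw [ht₀]; push_cast; field_simp
  have hθ₀ : (θ : ℂ) ≠ 0 := by
    have : Real.arccos x < Real.pi / 2 := Real.arccos_lt_pi_div_two.2 hx0
    exact_mod_cast (show θ ≠ 0 by linarith)
  have hs : (-(I * (t₀ : ℂ))) • (2 * I * (x : ℂ)) • T = ((2 * t₀ * x : ℝ) : ℂ) • T := by
    rw [smul_smul]; push_cast; congr 1; linear_combination (-2 * t₀ * x : ℂ) * I_sq
  rw [hs, exp_smul_apply_of_apply_apply_eq_neg_sq_smul (hθ ▸ hθ₀) (hω_sq ▸ h), hθ, ← ofReal_cos,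
    ← ofReal_sin, cos_pi_sub_two_mul_arccos (by linarith) hx1.le,
    sin_pi_sub_two_mul_arccos (by linarith) hx1.le, ← hω_def]
  match_scalars
  · ring
  · field_simp

end Exponential

section Grover

variable {N : ℕ} {σ w : EuclideanSpace ℂ (Fin N)} {x : ℂ}

theorem outer_apply (u v φ : EuclideanSpace ℂ (Fin N)) : outer u v φ = ⟪v, φ⟫_ℂ • u :=
  rfl

theorem grover_apply_left (hσ : ⟪σ, σ⟫_ℂ = 1) (hwσ : ⟪w, σ⟫_ℂ = x) (hσw : ⟪σ, w⟫_ℂ = x) :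
    (-((1 - (2 : ℂ) • outer σ σ) * (1 - (2 : ℂ) • outer w w))) σ
      = (1 - 4 * x ^ 2) • σ + (2 * x) • w := by
  simp only [neg_apply, mul_apply_eq_comp, sub_apply, one_apply_eq_self, smul_apply, outer_apply,
    inner_sub_right, inner_smul_right, hσ, hσw, hwσ]
  match_scalars <;> ring

theorem grover_apply_right (hw : ⟪w, w⟫_ℂ = 1) (hσw : ⟪σ, w⟫_ℂ = x) :
    (-((1 - (2 : ℂ) • outer σ σ) * (1 - (2 : ℂ) • outer w w))) w = w - (2 * x) • σ := by
  simp only [neg_apply, mul_apply_eq_comp, sub_apply, one_apply_eq_self, smul_apply, outer_apply,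
    inner_sub_right, inner_smul_right, hw, hσw]
  match_scalars <;> ring

theorem outer_sub_outer_apply_left (hσ : ⟪σ, σ⟫_ℂ = 1) (hwσ : ⟪w, σ⟫_ℂ = x) :
    (outer w σ - outer σ w) σ = w - x • σ := by
  rw [sub_apply, outer_apply, outer_apply, hσ, hwσ, one_smul]

theorem outer_sub_outer_apply_right (hw : ⟪w, w⟫_ℂ = 1) (hσw : ⟪σ, w⟫_ℂ = x) :
    (outer w σ - outer σ w) w = x • w - σ := by
  rw [sub_apply, outer_apply, outer_apply, hw, hσw, one_smul]

theorem outer_sub_outer_sq_apply_left (hσ : ⟪σ, σ⟫_ℂ = 1) (hw : ⟪w, w⟫_ℂ = 1)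
    (hwσ : ⟪w, σ⟫_ℂ = x) (hσw : ⟪σ, w⟫_ℂ = x) :
    (outer w σ - outer σ w) ((outer w σ - outer σ w) σ) = -(1 - x ^ 2) • σ := by
  rw [outer_sub_outer_apply_left hσ hwσ, map_sub, map_smul, outer_sub_outer_apply_left hσ hwσ,
    outer_sub_outer_apply_right hw hσw]
  match_scalars <;> ring

theorem outer_sub_outer_sq_apply_right (hσ : ⟪σ, σ⟫_ℂ = 1) (hw : ⟪w, w⟫_ℂ = 1)
    (hwσ : ⟪w, σ⟫_ℂ = x) (hσw : ⟪σ, w⟫_ℂ = x) :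
    (outer w σ - outer σ w) ((outer w σ - outer σ w) w) = -(1 - x ^ 2) • w := by
  rw [outer_sub_outer_apply_right hw hσw, map_sub, map_smul, outer_sub_outer_apply_left hσ hwσ,
    outer_sub_outer_apply_right hw hσw]
  match_scalars <;> ring

end Grover

theorem stmt_10 {N : ℕ} (σ w : EuclideanSpace ℂ (Fin N))
    (hσ : ‖σ‖ = 1) (hw : ‖w‖ = 1) (x : ℝ) (hx0 : 0 < x) (hx1 : x < 1)
    (hwσ : ⟪w, σ⟫_ℂ = (x : ℂ)) (hσw : ⟪σ, w⟫_ℂ = (x : ℂ))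
    (G H : EuclideanSpace ℂ (Fin N) →L[ℂ] EuclideanSpace ℂ (Fin N))
    (hG : G = -((1 - (2 : ℂ) • outer σ σ) * (1 - (2 : ℂ) • outer w w)))
    (hH : H = (2 * Complex.I * (x : ℂ)) • (outer w σ - outer σ w))
    (t₀ : ℝ) (ht₀ : t₀ = (Real.pi - 2 * Real.arccos x) / (2 * x * Real.sqrt (1 - x ^ 2))) :
    NormedSpace.exp ((-(Complex.I * (t₀ : ℂ))) • H) σ = G σ ∧
      NormedSpace.exp ((-(Complex.I * (t₀ : ℂ))) • H) w = G w := by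
  have hσσ : ⟪σ, σ⟫_ℂ = 1 := inner_self_eq_one_of_norm_eq_one hσ
  have hww : ⟪w, w⟫_ℂ = 1 := inner_self_eq_one_of_norm_eq_one hw
  rw [hG, hH, exp_hamiltonian_apply hx0 hx1 ht₀ (outer_sub_outer_sq_apply_left hσσ hww hwσ hσw),
    exp_hamiltonian_apply hx0 hx1 ht₀ (outer_sub_outer_sq_apply_right hσσ hww hwσ hσw),
    grover_apply_left hσσ hwσ hσw, grover_apply_right hww hσw,
    outer_sub_outer_apply_left hσσ hwσ, outer_sub_outer_apply_right hww hσw]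
  constructor <;> match_scalars <;> ring
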